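/- Let 1 < q ≤ 2, p = q/(q−1), and γ > 0. Let X be a real Banach space whose modulus of smoothness satisfies ρ(u) ≤ γ u^q for all u ≥ 0. Let (t_n)_{n≥1} be a weakness sequence with ∑_{n=1}^∞ t_n^p = ∞, let (δ_n)_{n≥0} be a perturbation sequence with ∑_{n=0}^∞ δ_n < ∞, and let (η_n)_{n≥1} be an error sequence with ∑_{n=1}^∞ η_n < ∞. Then for every dictionary D in X, every f ∈ X, and every realization of the AWCGA of f with these sequences, ‖f_n‖ → 0. -/

import Mathlib

open Filter

noncomputable section

variable {X : Type} [NormedAddCommGroup X] [NormedSpace ℝ X]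

/-- A dictionary: a symmetric set of unit-norm elements with dense linear span. -/
def IsDictionary (D : Set X) : Prop :=
  (∀ g ∈ D, ‖g‖ = 1) ∧ (∀ g ∈ D, -g ∈ D) ∧
    (Submodule.span ℝ D).topologicalClosure = ⊤

/-- The modulus of smoothness of `X`:
`ρ(u) = sup_{‖x‖=‖y‖=1} (‖x+uy‖+‖x-uy‖)/2 - 1`. -/
def modulusOfSmoothness (X : Type) [NormedAddCommGroup X] [NormedSpace ℝ X]
    (u : ℝ) : ℝ :=
  sSup {r : ℝ | ∃ x y : X, ‖x‖ = 1 ∧ ‖y‖ = 1 ∧ r = (‖x + u • y‖ + ‖x - u • y‖) / 2 - 1}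

/-- A weakness sequence: `0 ≤ t n ≤ 1` for `n ≥ 1`. -/
def IsWeaknessSeq (t : ℕ → ℝ) : Prop := ∀ n, 1 ≤ n → 0 ≤ t n ∧ t n ≤ 1

/-- A perturbation sequence: `0 ≤ δ n ≤ 1` for `n ≥ 0`. -/
def IsPerturbationSeq (δ : ℕ → ℝ) : Prop := ∀ n, 0 ≤ δ n ∧ δ n ≤ 1

/-- An error sequence: `η n ≥ 0` for `n ≥ 1`. -/
def IsErrorSeq (η : ℕ → ℝ) : Prop := ∀ n, 1 ≤ n → 0 ≤ η n

/-- `a k = o(b k)` as `k → ∞`: for every `ε > 0` eventually `a k ≤ ε * b k`. -/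
def IsLittleO (a b : ℕ → ℝ) : Prop := ∀ ε : ℝ, 0 < ε → ∃ N, ∀ k, N ≤ k → a k ≤ ε * b k

/-- `E_n`: the best approximation error of `f` from `Φ_n = span{φ_1, …, φ_n}`. -/
def approxError (f : X) (φ : ℕ → X) (n : ℕ) : ℝ :=
  sInf ((fun g => ‖f - g‖) '' (Submodule.span ℝ (φ '' Set.Icc 1 n) : Set X))

/-- A realization of the AWCGA of `f` with respect to a dictionary `D`,
a weakness sequence `t`, a perturbation sequence `δ` and an error sequence `η`.
Indices are shifted so that step `n ≥ 1` of the algorithm is encoded by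
the fields applied at `n - 1` (for `F`) and at `n` (for `φ`, `G`, `fs`). -/
structure AWCGARealization (D : Set X) (f : X) (t δ η : ℕ → ℝ) where
  F : ℕ → (X →L[ℝ] ℝ)
  φ : ℕ → X
  G : ℕ → X
  fs : ℕ → X
  fs_zero : fs 0 = f
  F_norm : ∀ n : ℕ, ‖F n‖ ≤ 1
  F_norming : ∀ n : ℕ, F n (fs n) ≥ (1 - δ n) * ‖fs n‖
  φ_mem : ∀ n : ℕ, φ (n + 1) ∈ D
  φ_greedy : ∀ n : ℕ, F n (φ (n + 1)) ≥ t (n + 1) * sSup ((fun g => F n g) '' D)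
  G_mem : ∀ n : ℕ, G (n + 1) ∈ Submodule.span ℝ (φ '' Set.Icc 1 (n + 1))
  G_near : ∀ n : ℕ, ‖f - G (n + 1)‖ ≤ (1 + η (n + 1)) * approxError f φ (n + 1)
  fs_succ : ∀ n : ℕ, fs (n + 1) = f - G (n + 1)

/-!
The best approximation errors `E_n` decrease to some `α`, and `‖f_n‖ → α` since `η_n → 0`.
Suppose `α > 0`. The bound `ρ(u) ≤ γ u^q` yields, for a `δ`-norming functional `F` of `x`,
`‖x - y‖ ≤ (1 + δ)‖x‖ - F y + 2γ ‖y‖^q ‖x‖^(1-q)`.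
With `y = -τ G_n ∈ Φ_n` and `τ` small, near-optimality of `G_n` forces `F_n(G_n) ≥ -ε`
eventually, so `F_n(f) ≈ α`; approximating `f` by a finite combination of dictionary elements
then gives `sup_D F_n ≥ c > 0`. With `y = μ t_{n+1}^(p-1) φ_{n+1}` the same bound gives
`E_{n+1} ≤ E_n + (η_n + δ_n)‖f_n‖ - κ t_{n+1}^p`, and since the errors are summable this
forces `∑ t_n^p < ∞`.
-/

open Topology

theorem exists_pos_mul_rpow_le {s : ℝ} (hs : s ≠ 0) (C : ℝ) {ε : ℝ} (hε : 0 < ε) :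
    ∃ μ, 0 < μ ∧ C * μ ^ s ≤ ε := by
  have hC : 0 < |C| + 1 := by positivity
  refine ⟨(ε / (|C| + 1)) ^ s⁻¹, by positivity, ?_⟩
  rw [Real.rpow_inv_rpow (by positivity) hs, mul_div_assoc', div_le_iff₀ hC]
  nlinarith [le_abs_self C]

theorem summable_of_eventually_le_add_sub {u e a : ℕ → ℝ} (hu : ∀ n, 0 ≤ u n)
    (he : Summable e) (ha : ∀ n, 0 ≤ a n) (h : ∀ᶠ n in atTop, u (n + 1) ≤ u n + e n - a n) :
    Summable a := by
  obtain ⟨N, hN⟩ := eventually_atTop.1 h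
  obtain ⟨C, hC⟩ := ((summable_nat_add_iff N).2 he).tendsto_sum_tsum_nat.bddAbove_range
  have telescope : ∀ m, ∑ i ∈ Finset.range m, a (i + N) ≤
      u N - u (m + N) + ∑ i ∈ Finset.range m, e (i + N) := by
    intro m
    induction m with
    | zero => simp
    | succ m ih =>
      rw [Finset.sum_range_succ, Finset.sum_range_succ, Nat.succ_add]
      linarith [hN (m + N) (Nat.le_add_left N m)]
  refine (summable_nat_add_iff N).1
    (summable_of_sum_range_le (c := u N + C) (fun i => ha _) fun m => ?_)
  linarith [telescope m, hu (m + N), hC ⟨m, rfl⟩]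

theorem ContinuousLinearMap.abs_apply_le_norm {F : X →L[ℝ] ℝ} (hF : ‖F‖ ≤ 1) (z : X) :
    |F z| ≤ ‖z‖ := by
  simpa using F.le_of_opNorm_le hF z

theorem norm_add_add_norm_sub_le_modulusOfSmoothness {x : X} (hx : ‖x‖ = 1) (y : X) :
    ‖x + y‖ + ‖x - y‖ ≤ 2 + 2 * modulusOfSmoothness X ‖y‖ := by
  obtain ⟨e, he, hye⟩ : ∃ e : X, ‖e‖ = 1 ∧ ‖y‖ • e = y := by
    rcases eq_or_ne y 0 with rfl | hy
    · exact ⟨x, hx, by simp⟩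
    · exact ⟨‖y‖⁻¹ • y, by simp [norm_smul, hy], by simp [smul_smul, hy]⟩
  have hbdd : BddAbove {r : ℝ | ∃ a b : X, ‖a‖ = 1 ∧ ‖b‖ = 1 ∧
      r = (‖a + ‖y‖ • b‖ + ‖a - ‖y‖ • b‖) / 2 - 1} := by
    refine ⟨‖y‖, ?_⟩
    rintro r ⟨a, b, ha, hb, rfl⟩
    have h₁ := norm_add_le a (‖y‖ • b)
    have h₂ := norm_sub_le a (‖y‖ • b)
    simp only [norm_smul, norm_norm, ha, hb, mul_one] at h₁ h₂
    linarith
  have := le_csSup hbdd ⟨x, e, hx, he, rfl⟩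
  rw [hye] at this
  unfold modulusOfSmoothness
  linarith

theorem norm_add_add_norm_sub_le {q γ : ℝ}
    (hρ : ∀ u : ℝ, 0 ≤ u → modulusOfSmoothness X u ≤ γ * u ^ q) {x : X} (hx : 0 < ‖x‖) (y : X) :
    ‖x + y‖ + ‖x - y‖ ≤ 2 * ‖x‖ + 2 * γ * ‖y‖ ^ q * ‖x‖ ^ (1 - q) := by
  have hunit : ‖‖x‖⁻¹ • x‖ = 1 := by simp [norm_smul, hx.ne']
  have key := norm_add_add_norm_sub_le_modulusOfSmoothness hunit (‖x‖⁻¹ • y)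
  rw [← smul_add, ← smul_sub, norm_smul, norm_smul, norm_smul, norm_inv, norm_norm] at key
  have hscale : ‖x‖ * (‖x‖⁻¹ * ‖y‖) ^ q = ‖y‖ ^ q * ‖x‖ ^ (1 - q) := by
    rw [Real.mul_rpow (by positivity) (norm_nonneg y), Real.inv_rpow hx.le,
      Real.rpow_sub hx, Real.rpow_one]
    field_simp
  calc ‖x + y‖ + ‖x - y‖ = ‖x‖ * (‖x‖⁻¹ * ‖x + y‖ + ‖x‖⁻¹ * ‖x - y‖) := by
        field_simp
    _ ≤ ‖x‖ * (2 + 2 * (γ * (‖x‖⁻¹ * ‖y‖) ^ q)) := by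
        refine mul_le_mul_of_nonneg_left ?_ hx.le
        linarith [hρ (‖x‖⁻¹ * ‖y‖) (by positivity)]
    _ = 2 * ‖x‖ + 2 * γ * ‖y‖ ^ q * ‖x‖ ^ (1 - q) := by
        linear_combination 2 * γ * hscale

theorem norm_sub_le_of_norming {q γ δ : ℝ}
    (hρ : ∀ u : ℝ, 0 ≤ u → modulusOfSmoothness X u ≤ γ * u ^ q) {F : X →L[ℝ] ℝ}
    (hF : ‖F‖ ≤ 1) {x : X} (hx : 0 < ‖x‖) (hFx : (1 - δ) * ‖x‖ ≤ F x) (y : X) :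
    ‖x - y‖ ≤ (1 + δ) * ‖x‖ - F y + 2 * γ * ‖y‖ ^ q * ‖x‖ ^ (1 - q) := by
  have hFxy := (abs_le.1 (F.abs_apply_le_norm hF (x + y))).2
  rw [map_add] at hFxy
  linarith [norm_add_add_norm_sub_le hρ hx y]

theorem approxError_nonneg (f : X) (φ : ℕ → X) (n : ℕ) : 0 ≤ approxError f φ n :=
  Real.sInf_nonneg (by rintro _ ⟨g, -, rfl⟩; exact norm_nonneg _)

theorem approxError_le_norm_sub (f : X) (φ : ℕ → X) {n : ℕ} {g : X}
    (hg : g ∈ Submodule.span ℝ (φ '' Set.Icc 1 n)) : approxError f φ n ≤ ‖f - g‖ :=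
  csInf_le ⟨0, by rintro _ ⟨g, -, rfl⟩; exact norm_nonneg _⟩ ⟨g, hg, rfl⟩

theorem approxError_antitone (f : X) (φ : ℕ → X) : Antitone (approxError f φ) := by
  intro m n hmn
  refine csInf_le_csInf ⟨0, by rintro _ ⟨g, -, rfl⟩; exact norm_nonneg _⟩
    ⟨_, 0, Submodule.zero_mem _, rfl⟩ (Set.image_mono ?_)
  exact Submodule.span_mono (Set.image_mono (Set.Icc_subset_Icc_right hmn))

namespace IsDictionary

variable {D : Set X}

theorem bddAbove_image_apply (hD : IsDictionary D) {F : X →L[ℝ] ℝ} (hF : ‖F‖ ≤ 1) :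
    BddAbove ((fun g => F g) '' D) := by
  refine ⟨1, ?_⟩
  rintro _ ⟨g, hg, rfl⟩
  exact (le_abs_self _).trans ((F.abs_apply_le_norm hF g).trans_eq (hD.1 g hg))

theorem abs_apply_le_sSup (hD : IsDictionary D) {F : X →L[ℝ] ℝ} (hF : ‖F‖ ≤ 1) {g : X}
    (hg : g ∈ D) : |F g| ≤ sSup ((fun g => F g) '' D) := by
  have hneg : F (-g) ≤ _ := le_csSup (hD.bddAbove_image_apply hF) ⟨-g, hD.2.1 g hg, rfl⟩
  rw [map_neg] at hneg
  exact abs_le.2 ⟨by linarith, le_csSup (hD.bddAbove_image_apply hF) ⟨g, hg, rfl⟩⟩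

theorem sSup_image_apply_nonneg (hD : IsDictionary D) {F : X →L[ℝ] ℝ} (hF : ‖F‖ ≤ 1) :
    0 ≤ sSup ((fun g => F g) '' D) := by
  rcases D.eq_empty_or_nonempty with rfl | ⟨g, hg⟩
  · simp
  · exact (abs_nonneg _).trans (hD.abs_apply_le_sSup hF hg)

theorem exists_apply_le_mul_sSup (hD : IsDictionary D) {v : X}
    (hv : v ∈ Submodule.span ℝ D) : ∃ A, 0 < A ∧ ∀ F : X →L[ℝ] ℝ, ‖F‖ ≤ 1 →
      F v ≤ A * sSup ((fun g => F g) '' D) := by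
  obtain ⟨c, hcD, rfl⟩ := Submodule.mem_span_set.1 hv
  refine ⟨∑ g ∈ c.support, |c g| + 1, by positivity, fun F hF => ?_⟩
  have hs := hD.sSup_image_apply_nonneg hF
  calc F (c.sum fun g a => a • g) = ∑ g ∈ c.support, c g * F g := by
        simp [Finsupp.sum, map_sum]
    _ ≤ ∑ g ∈ c.support, |c g| * sSup ((fun g => F g) '' D) := by
        refine Finset.sum_le_sum fun g hg => ?_
        calc c g * F g ≤ |c g * F g| := le_abs_self _
          _ = |c g| * |F g| := abs_mul _ _
          _ ≤ _ := by gcongr; exact hD.abs_apply_le_sSup hF (hcD hg)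
    _ ≤ (∑ g ∈ c.support, |c g| + 1) * sSup ((fun g => F g) '' D) := by
        rw [← Finset.sum_mul]
        nlinarith

theorem exists_mem_span_norm_sub_lt (hD : IsDictionary D) (f : X) {ε : ℝ} (hε : 0 < ε) :
    ∃ v ∈ Submodule.span ℝ D, ‖f - v‖ < ε := by
  have hf : f ∈ closure (Submodule.span ℝ D : Set X) := by
    rw [← Submodule.topologicalClosure_coe, hD.2.2]
    trivial
  obtain ⟨v, hv, hfv⟩ := Metric.mem_closure_iff.1 hf ε hε
  exact ⟨v, hv, by rwa [← dist_eq_norm]⟩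

end IsDictionary

namespace AWCGARealization

variable {D : Set X} {f : X} {t δ η : ℕ → ℝ} (r : AWCGARealization D f t δ η)

theorem fs_eq_sub {n : ℕ} (hn : 1 ≤ n) : r.fs n = f - r.G n := by
  obtain ⟨k, rfl⟩ := Nat.exists_eq_add_of_le' hn
  exact r.fs_succ k

theorem G_mem_span {n : ℕ} (hn : 1 ≤ n) : r.G n ∈ Submodule.span ℝ (r.φ '' Set.Icc 1 n) := by
  obtain ⟨k, rfl⟩ := Nat.exists_eq_add_of_le' hn
  exact r.G_mem k

theorem approxError_le_norm_fs {n : ℕ} (hn : 1 ≤ n) : approxError f r.φ n ≤ ‖r.fs n‖ := by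
  rw [r.fs_eq_sub hn]
  exact approxError_le_norm_sub f r.φ (r.G_mem_span hn)

theorem norm_fs_le {n : ℕ} (hn : 1 ≤ n) : ‖r.fs n‖ ≤ (1 + η n) * approxError f r.φ n := by
  obtain ⟨k, rfl⟩ := Nat.exists_eq_add_of_le' hn
  rw [r.fs_succ k]
  exact r.G_near k

theorem tendsto_norm_fs (hη : Tendsto η atTop (𝓝 0)) :
    Tendsto (fun n => ‖r.fs n‖) atTop (𝓝 (⨅ n, approxError f r.φ n)) := by
  have hE := tendsto_atTop_ciInf (approxError_antitone f r.φ)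
    ⟨0, by rintro _ ⟨n, rfl⟩; exact approxError_nonneg f r.φ n⟩
  have hupper := ((tendsto_const_nhds (x := (1 : ℝ))).add hη).mul hE
  rw [add_zero, one_mul] at hupper
  exact tendsto_of_tendsto_of_tendsto_of_le_of_le' hE hupper
    (eventually_atTop.2 ⟨1, fun n hn => r.approxError_le_norm_fs hn⟩)
    (eventually_atTop.2 ⟨1, fun n hn => r.norm_fs_le hn⟩)

theorem approxError_le_of_G_add_mem {q γ : ℝ}
    (hρ : ∀ u : ℝ, 0 ≤ u → modulusOfSmoothness X u ≤ γ * u ^ q) (hη : IsErrorSeq η)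
    {n m : ℕ} (hn : 1 ≤ n) (hfs : 0 < ‖r.fs n‖) {y : X}
    (hy : r.G n + y ∈ Submodule.span ℝ (r.φ '' Set.Icc 1 m)) :
    approxError f r.φ m ≤ approxError f r.φ n + (η n + δ n) * ‖r.fs n‖ - r.F n y +
      2 * γ * ‖y‖ ^ q * ‖r.fs n‖ ^ (1 - q) := by
  have hEm : approxError f r.φ m ≤ ‖r.fs n - y‖ := by
    rw [r.fs_eq_sub hn, sub_sub]
    exact approxError_le_norm_sub f r.φ hy
  have hstep := norm_sub_le_of_norming hρ (r.F_norm n) hfs (r.F_norming n) y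
  have hηE : η n * approxError f r.φ n ≤ η n * ‖r.fs n‖ :=
    mul_le_mul_of_nonneg_left (r.approxError_le_norm_fs hn) (hη n hn)
  linarith [r.norm_fs_le hn]


theorem eventually_neg_le_F_apply_G {q γ : ℝ} (hq : 1 < q) (hγ : 0 < γ)
    (hρ : ∀ u : ℝ, 0 ≤ u → modulusOfSmoothness X u ≤ γ * u ^ q) (hη : IsErrorSeq η)
    {α : ℝ} (hα : 0 < α) (hfs : Tendsto (fun n => ‖r.fs n‖) atTop (𝓝 α))
    (hηδ : Tendsto (fun n => η n + δ n) atTop (𝓝 0)) {ε : ℝ} (hε : 0 < ε) :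
    ∀ᶠ n in atTop, -ε ≤ r.F n (r.G n) := by
  set M := ‖f‖ + 2 * α
  set K := (α / 2) ^ (1 - q)
  obtain ⟨τ, hτ, hτC⟩ := exists_pos_mul_rpow_le (s := q - 1) (by linarith)
    (2 * γ * M ^ q * K) (half_pos hε)
  have herr : Tendsto (fun n => (η n + δ n) * ‖r.fs n‖) atTop (𝓝 0) := by
    simpa using hηδ.mul hfs
  filter_upwards [hfs.eventually_const_le (half_lt_self hα),
    hfs.eventually_le_const (show α < 2 * α by linarith),
    herr.eventually_le_const (show 0 < τ * (ε / 2) by positivity),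
    eventually_ge_atTop 1] with n hlow hup herrn hn
  have hGM : ‖τ • r.G n‖ ≤ τ * M := by
    rw [norm_smul, Real.norm_of_nonneg hτ.le]
    refine mul_le_mul_of_nonneg_left ?_ hτ.le
    rw [show r.G n = f - r.fs n by rw [r.fs_eq_sub hn, sub_sub_cancel]]
    linarith [norm_sub_le f (r.fs n)]
  have hmem : r.G n + -(τ • r.G n) ∈ Submodule.span ℝ (r.φ '' Set.Icc 1 n) :=
    Submodule.add_mem _ (r.G_mem_span hn)
      (Submodule.neg_mem _ (Submodule.smul_mem _ τ (r.G_mem_span hn)))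
  have key := r.approxError_le_of_G_add_mem hρ hη hn (by linarith) hmem
  rw [norm_neg, map_neg, map_smul, smul_eq_mul] at key
  have hsmooth : 2 * γ * ‖τ • r.G n‖ ^ q * ‖r.fs n‖ ^ (1 - q) ≤ τ * (ε / 2) := by
    calc 2 * γ * ‖τ • r.G n‖ ^ q * ‖r.fs n‖ ^ (1 - q) ≤ 2 * γ * (τ * M) ^ q * K := by
          gcongr
          exact Real.rpow_le_rpow_of_nonpos (by positivity) hlow (by linarith)
      _ = τ * (2 * γ * M ^ q * K * τ ^ (q - 1)) := by
          rw [Real.mul_rpow hτ.le (by positivity), Real.rpow_sub_one hτ.ne']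
          field_simp
      _ ≤ τ * (ε / 2) := by gcongr
  have : 0 ≤ τ * (r.F n (r.G n) + ε) := by linarith
  linarith [(mul_nonneg_iff_of_pos_left hτ).1 this]

theorem exists_pos_eventually_le_sSup (hD : IsDictionary D) {α : ℝ} (hα : 0 < α)
    (hfs : Tendsto (fun n => ‖r.fs n‖) atTop (𝓝 α)) (hδ : Tendsto δ atTop (𝓝 0))
    (hFG : ∀ᶠ n in atTop, -(α / 8) ≤ r.F n (r.G n)) :
    ∃ c, 0 < c ∧ ∀ᶠ n in atTop, c ≤ sSup ((fun g => r.F n g) '' D) := by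
  obtain ⟨v, hv, hfv⟩ := hD.exists_mem_span_norm_sub_lt f (show 0 < α / 8 by positivity)
  obtain ⟨A, hA, hvA⟩ := hD.exists_apply_le_mul_sSup hv
  refine ⟨α / (4 * A), by positivity, ?_⟩
  have hnorming : Tendsto (fun n => (1 - δ n) * ‖r.fs n‖) atTop (𝓝 α) := by
    simpa using ((tendsto_const_nhds (x := (1 : ℝ))).sub hδ).mul hfs
  filter_upwards [hnorming.eventually_const_le (half_lt_self hα), hFG, eventually_ge_atTop 1]
    with n hnorm hG hn
  have hvf : -(α / 8) ≤ r.F n (v - f) := by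
    have := (abs_le.1 ((r.F n).abs_apply_le_norm (r.F_norm n) (v - f))).1
    rw [norm_sub_rev] at this
    linarith
  have hFv : α / 4 ≤ r.F n v := by
    rw [show v = r.fs n + r.G n + (v - f) by rw [r.fs_eq_sub hn]; abel, map_add, map_add]
    linarith [r.F_norming n]
  rw [div_le_iff₀ (by positivity)]
  linarith [hvA (r.F n) (r.F_norm n)]

theorem exists_pos_eventually_approxError_succ_le {q p γ : ℝ} (hq : 1 < q)
    (hp : p = q / (q - 1)) (hγ : 0 < γ)
    (hρ : ∀ u : ℝ, 0 ≤ u → modulusOfSmoothness X u ≤ γ * u ^ q) (ht : IsWeaknessSeq t)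
    (hη : IsErrorSeq η) (hD : IsDictionary D) {α : ℝ} (hα : 0 < α)
    (hfs : Tendsto (fun n => ‖r.fs n‖) atTop (𝓝 α)) {c : ℝ} (hc : 0 < c)
    (hsup : ∀ᶠ n in atTop, c ≤ sSup ((fun g => r.F n g) '' D)) :
    ∃ κ, 0 < κ ∧ ∀ᶠ n in atTop, approxError f r.φ (n + 1) ≤
      approxError f r.φ n + (η n + δ n) * ‖r.fs n‖ - κ * t (n + 1) ^ p := by
  set K := (α / 2) ^ (1 - q)
  obtain ⟨μ, hμ, hμC⟩ := exists_pos_mul_rpow_le (s := q - 1) (by linarith) (2 * γ * K)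
    (half_pos hc)
  refine ⟨μ * c / 2, by positivity, ?_⟩
  filter_upwards [hfs.eventually_const_le (half_lt_self hα), hsup, eventually_ge_atTop 1]
    with n hlow hsupn hn
  have htn : 0 ≤ t (n + 1) := (ht (n + 1) (by omega)).1
  have hp1 : p - 1 = (q - 1)⁻¹ := by
    rw [hp]
    field_simp [(by linarith : q - 1 ≠ 0)]
    ring
  -- This step length makes both the gain `τ t` and the smoothness loss `τ^q` multiples of `t^p`.
  set τ := μ * t (n + 1) ^ (p - 1)
  have hτt : τ * t (n + 1) = μ * t (n + 1) ^ p := by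
    conv_rhs => rw [← sub_add_cancel p 1]
    rw [Real.rpow_add' htn (by rw [sub_add_cancel, hp]; positivity), Real.rpow_one, mul_assoc]
  have hτq : τ ^ q = μ ^ q * t (n + 1) ^ p := by
    rw [Real.mul_rpow hμ.le (by positivity), ← Real.rpow_mul htn, hp1, hp]
    field_simp
  have hmem : r.G n + τ • r.φ (n + 1) ∈ Submodule.span ℝ (r.φ '' Set.Icc 1 (n + 1)) :=
    Submodule.add_mem _
      (Submodule.span_mono (Set.image_mono (Set.Icc_subset_Icc_right n.le_succ))
        (r.G_mem_span hn))
      (Submodule.smul_mem _ τ (Submodule.subset_span ⟨n + 1, ⟨by omega, le_rfl⟩, rfl⟩))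
  have key := r.approxError_le_of_G_add_mem hρ hη hn (by linarith) hmem
  rw [map_smul, smul_eq_mul, norm_smul, hD.1 _ (r.φ_mem n), mul_one,
    Real.norm_of_nonneg (by positivity)] at key
  have hgreedy : τ * (t (n + 1) * c) ≤ τ * r.F n (r.φ (n + 1)) :=
    mul_le_mul_of_nonneg_left
      ((mul_le_mul_of_nonneg_left hsupn htn).trans (r.φ_greedy n)) (by positivity)
  have hsmooth : 2 * γ * τ ^ q * ‖r.fs n‖ ^ (1 - q) ≤ μ * t (n + 1) ^ p * (c / 2) := by
    calc 2 * γ * τ ^ q * ‖r.fs n‖ ^ (1 - q) ≤ 2 * γ * τ ^ q * K := by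
          gcongr
          exact Real.rpow_le_rpow_of_nonpos (by positivity) hlow (by linarith)
      _ = μ * t (n + 1) ^ p * (2 * γ * K * μ ^ (q - 1)) := by
          rw [hτq, Real.rpow_sub_one hμ.ne']
          field_simp
      _ ≤ μ * t (n + 1) ^ p * (c / 2) := by gcongr
  have hdecrease : τ * (t (n + 1) * c) = μ * t (n + 1) ^ p * c := by rw [← mul_assoc, hτt]
  linarith

end AWCGARealization

theorem stmt_4_general {X : Type} [NormedAddCommGroup X] [NormedSpace ℝ X]
    (q p γ : ℝ) (hq1 : 1 < q) (hp : p = q / (q - 1)) (hγ : 0 < γ)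
    (hρ : ∀ u : ℝ, 0 ≤ u → modulusOfSmoothness X u ≤ γ * u ^ q)
    (t δ η : ℕ → ℝ) (ht : IsWeaknessSeq t)
    (hη : IsErrorSeq η)
    (htsum : ¬ Summable (fun m => t (m + 1) ^ p))
    (hδsum : Summable δ)
    (hηsum : Summable (fun m => η (m + 1)))
    (D : Set X) (hD : IsDictionary D)
    (f : X) (r : AWCGARealization D f t δ η) :
    Tendsto (fun m => ‖r.fs m‖) atTop (nhds 0) := by
  have hηsum' : Summable η := (summable_nat_add_iff 1).1 hηsum
  have hηδsum : Summable (fun n => η n + δ n) := hηsum'.add hδsum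
  have hfs := r.tendsto_norm_fs hηsum'.tendsto_atTop_zero
  obtain hα | hα := (le_ciInf (approxError_nonneg f r.φ)).eq_or_lt
  · rwa [← hα] at hfs
  obtain ⟨c, hc, hsup⟩ := r.exists_pos_eventually_le_sSup hD hα hfs hδsum.tendsto_atTop_zero
    (r.eventually_neg_le_F_apply_G hq1 hγ hρ hη hα hfs hηδsum.tendsto_atTop_zero
      (by positivity))
  obtain ⟨κ, hκ, hstep⟩ :=
    r.exists_pos_eventually_approxError_succ_le hq1 hp hγ hρ ht hη hD hα hfs hc hsup
  obtain ⟨B, hB⟩ := hfs.bddAbove_range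
  have herr : Summable (fun n => (η n + δ n) * ‖r.fs n‖) :=
    (hηδsum.abs.mul_right B).of_norm_bounded fun n => by
      rw [Real.norm_eq_abs, abs_mul, abs_norm]
      exact mul_le_mul_of_nonneg_left (hB ⟨n, rfl⟩) (abs_nonneg _)
  refine (htsum ((summable_mul_left_iff hκ.ne').1 ?_)).elim
  exact summable_of_eventually_le_add_sub (approxError_nonneg f r.φ) herr
    (fun n => mul_nonneg hκ.le (Real.rpow_nonneg (ht (n + 1) (by omega)).1 p)) hstep

/-- Convergence of the AWCGA when `∑ t_n^p = ∞` and `(δ_n), (η_n) ∈ ℓ₁`. -/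
theorem stmt_4 {X : Type} [NormedAddCommGroup X] [NormedSpace ℝ X] [CompleteSpace X]
    (q p γ : ℝ) (hq1 : 1 < q) (hq2 : q ≤ 2) (hp : p = q / (q - 1)) (hγ : 0 < γ)
    (hρ : ∀ u : ℝ, 0 ≤ u → modulusOfSmoothness X u ≤ γ * u ^ q)
    (t δ η : ℕ → ℝ) (ht : IsWeaknessSeq t) (hδ : IsPerturbationSeq δ)
    (hη : IsErrorSeq η)
    (htsum : ¬ Summable (fun m => t (m + 1) ^ p))
    (hδsum : Summable δ)
    (hηsum : Summable (fun m => η (m + 1)))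
    (D : Set X) (hD : IsDictionary D)
    (f : X) (r : AWCGARealization D f t δ η) :
    Tendsto (fun m => ‖r.fs m‖) atTop (nhds 0) :=
  stmt_4_general q p γ hq1 hp hγ hρ t δ η ht hη htsum hδsum hηsum D hD f r
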